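/- There exists a constant C > 0 such that for every integer n ≥ 1, | α_n − 4π log 2 | ≤ C / n, where α_n := Σ_{k ∈ ℤ³∖{0}, n ≤ |k| ≤ 2n} |k|^{−3}. In particular α_n = 4π log 2 + O(n^{−1}) as n → ∞. -/

import Mathlib

noncomputable section

/-- Euclidean norm of a lattice point `k ∈ ℤ³`, viewed as a vector of `ℝ³`. -/
def znorm3 (k : Fin 3 → ℤ) : ℝ := Real.sqrt (∑ i, ((k i : ℝ)) ^ 2)

open scoped Classical in
/-- `α_n = Σ_{k ∈ ℤ³∖{0}, n ≤ |k| ≤ 2n} |k|⁻³`, written as a `tsum` over all of `ℤ³`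
of a function supported on the (finite) spherical shell `n ≤ |k| ≤ 2n`. -/
def alphaSeq (n : ℕ) : ℝ :=
  ∑' k : Fin 3 → ℤ,
    if k ≠ 0 ∧ (n : ℝ) ≤ znorm3 k ∧ znorm3 k ≤ 2 * n then 1 / znorm3 k ^ 3 else 0

/-!
Attach to each lattice point `k` the unit cube `k + [0,1)³`; its points `x` satisfy
`|x - k| ≤ √3 ≤ 2`. Since `|k| ≥ n` on the shell, `|k|⁻³` and `|x|⁻³` differ on that cube by a
factor between `(1 - 2/n)³` and `(1 + 2/n)³`, so `α_n` lies between `(1 - 2/n)³` times the integral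
of `|x|⁻³` over `n + 2 ≤ |x| ≤ 2n - 2` and `(1 + 2/n)³` times its integral over
`n - 2 ≤ |x| ≤ 2n + 2`. In polar coordinates `∫_{a ≤ |x| ≤ b} |x|⁻³ dx = 4π log (b / a)`,
and both bounds are `4π log 2 + O(1/n)`. For `n < 4` the trivial bound `α_n ≤ 125` suffices.
-/

open Function MeasureTheory Metric Set Module Real

def annulus {E : Type*} [Norm E] (a b : ℝ) : Set E := {x | ‖x‖ ∈ Icc a b}

lemma measurableSet_annulus {E : Type*} [NormedAddCommGroup E] [MeasurableSpace E]
    [OpensMeasurableSpace E] (a b : ℝ) : MeasurableSet (annulus a b : Set E) :=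
  measurableSet_Icc.preimage measurable_norm

lemma isCompact_annulus {E : Type*} [NormedAddCommGroup E] [ProperSpace E] (a b : ℝ) :
    IsCompact (annulus a b : Set E) :=
  (isCompact_closedBall 0 b).of_isClosed_subset (isClosed_Icc.preimage continuous_norm)
    fun _ hx => mem_closedBall_zero_iff.2 hx.2

section Radial

variable {E : Type*} [NormedAddCommGroup E] [NormedSpace ℝ E] [FiniteDimensional ℝ E]
  [MeasurableSpace E] [BorelSpace E]

lemma integrableOn_annulus_inv_norm_pow (μ : Measure E) [IsFiniteMeasureOnCompacts μ] (p : ℕ)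
    {a : ℝ} (ha : 0 < a) (b : ℝ) : IntegrableOn (fun x => ‖x‖⁻¹ ^ p) (annulus a b) μ :=
  ContinuousOn.integrableOn_compact (isCompact_annulus a b) <|
    ((continuous_norm.continuousOn).inv₀ fun _ hx => (ha.trans_le hx.1).ne').pow p

variable (μ : Measure E) [μ.IsAddHaarMeasure] [Nontrivial E]

lemma setIntegral_annulus_fun_norm (f : ℝ → ℝ) {a b : ℝ} (ha : 0 < a) (hab : a ≤ b) :
    ∫ x in annulus a b, f ‖x‖ ∂μ =
      finrank ℝ E * μ.real (ball 0 1) * ∫ r in a..b, r ^ (finrank ℝ E - 1) * f r := by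
  have hIcc : Ioi 0 ∩ Icc a b = Icc a b := inter_eq_right.2 fun _ hr => ha.trans_le hr.1
  rw [← integral_indicator (measurableSet_annulus a b)]
  change ∫ x, (Icc a b).indicator f ‖x‖ ∂μ = _
  rw [integral_fun_norm_addHaar μ, intervalIntegral.integral_of_le hab,
    ← integral_Icc_eq_integral_Ioc, nsmul_eq_mul, smul_eq_mul, mul_assoc]
  congr 2
  have : (fun r : ℝ => r ^ (finrank ℝ E - 1) • (Icc a b).indicator f r) =
      (Icc a b).indicator fun r => r ^ (finrank ℝ E - 1) * f r := by
    ext r; by_cases hr : r ∈ Icc a b <;> simp [hr]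
  rw [this, setIntegral_indicator measurableSet_Icc, hIcc]

lemma setIntegral_annulus_inv_norm_pow_finrank {a b : ℝ} (ha : 0 < a) (hab : a ≤ b) :
    ∫ x in annulus a b, ‖x‖⁻¹ ^ finrank ℝ E ∂μ =
      finrank ℝ E * μ.real (ball 0 1) * log (b / a) := by
  rw [setIntegral_annulus_fun_norm μ (fun r => r⁻¹ ^ finrank ℝ E) ha hab,
    ← integral_inv_of_pos ha (ha.trans_le hab)]
  congr 1
  refine intervalIntegral.integral_congr fun r hr => ?_
  have hr : r ≠ 0 := (ha.trans_le (uIcc_of_le hab ▸ hr).1).ne'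
  obtain ⟨d, hd⟩ := Nat.exists_eq_add_one_of_ne_zero (finrank_pos (R := ℝ) (M := E)).ne'
  simp only [hd, Nat.add_sub_cancel, pow_succ, inv_pow]
  field_simp

end Radial

section Lattice

variable {ι : Type*}

def latticePoint (k : ι → ℤ) : EuclideanSpace ℝ ι := WithLp.toLp 2 fun i => (k i : ℝ)

def unitCube (k : ι → ℤ) : Set (EuclideanSpace ℝ ι) := {x | ∀ i, x i ∈ Ico (k i : ℝ) (k i + 1)}

lemma floor_eq_of_mem_unitCube {k : ι → ℤ} {x : EuclideanSpace ℝ ι} (hx : x ∈ unitCube k)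
    (i : ι) : ⌊x i⌋ = k i :=
  Int.floor_eq_iff.2 (hx i)

lemma mem_unitCube_floor (x : EuclideanSpace ℝ ι) : x ∈ unitCube fun i => ⌊x i⌋ :=
  fun _ => ⟨Int.floor_le _, Int.lt_floor_add_one _⟩

lemma pairwise_disjoint_unitCube : Pairwise (Disjoint on (unitCube (ι := ι))) :=
  fun _ _ hkl => Set.disjoint_left.2 fun _ hk hl => hkl <| funext fun i => by
    rw [← floor_eq_of_mem_unitCube hk i, floor_eq_of_mem_unitCube hl i]

lemma unitCube_eq_preimage (k : ι → ℤ) :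
    unitCube k = WithLp.ofLp ⁻¹' univ.pi fun i => Ico (k i : ℝ) (k i + 1) := by
  ext x; simp [unitCube]

variable [Fintype ι]

lemma measurableSet_unitCube (k : ι → ℤ) : MeasurableSet (unitCube k) := by
  rw [unitCube_eq_preimage]
  exact (PiLp.volume_preserving_ofLp ι).measurable (.univ_pi fun _ => measurableSet_Ico)

lemma volume_unitCube (k : ι → ℤ) : volume (unitCube k) = 1 := by
  rw [unitCube_eq_preimage, (PiLp.volume_preserving_ofLp ι).measure_preimage
    (MeasurableSet.univ_pi fun _ => measurableSet_Ico).nullMeasurableSet, volume_pi_pi]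
  simp

lemma setIntegral_unitCube_const (k : ι → ℤ) (c : ℝ) : ∫ _ in unitCube k, c = c := by
  simp [measureReal_def, volume_unitCube]

lemma integrableOn_unitCube_const (k : ι → ℤ) (c : ℝ) : IntegrableOn (fun _ => c) (unitCube k) :=
  integrableOn_const (by simp [volume_unitCube])

lemma norm_sub_latticePoint_le {k : ι → ℤ} {x : EuclideanSpace ℝ ι} (hx : x ∈ unitCube k) :
    ‖x - latticePoint k‖ ≤ √(Fintype.card ι) := by
  rw [EuclideanSpace.norm_eq]
  gcongr
  calc ∑ i, ‖(x - latticePoint k) i‖ ^ 2 ≤ ∑ _i : ι, (1 : ℝ) := by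
        gcongr with i
        obtain ⟨h₁, h₂⟩ := hx i
        rw [Real.norm_eq_abs, sq_abs]
        change (x i - k i) ^ 2 ≤ 1
        nlinarith
    _ = Fintype.card ι := by simp

open scoped Classical in
def latticeShell (A B : ℝ) : Finset (ι → ℤ) :=
  (Fintype.piFinset fun _ => Finset.Icc (-⌈B⌉) ⌈B⌉).filter fun k => latticePoint k ∈ annulus A B

lemma mem_latticeShell {A B : ℝ} {k : ι → ℤ} :
    k ∈ latticeShell A B ↔ latticePoint k ∈ annulus A B := by
  classical
  simp only [latticeShell, Finset.mem_filter, Fintype.mem_piFinset, Finset.mem_Icc,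
    and_iff_right_iff_imp]
  intro hk i
  have h : |(k i : ℝ)| ≤ ⌈B⌉ :=
    (PiLp.norm_apply_le (latticePoint k) i).trans (hk.2.trans (Int.le_ceil B))
  rw [abs_le] at h
  exact ⟨by exact_mod_cast h.1, by exact_mod_cast h.2⟩

lemma card_latticeShell_le (A B : ℝ) :
    (latticeShell (ι := ι) A B).card ≤ (2 * ⌈B⌉ + 1).toNat ^ Fintype.card ι := by
  classical
  refine (Finset.card_filter_le _ _).trans_eq ?_
  simp [Fintype.card_piFinset, Int.card_Icc, two_mul, add_right_comm]

lemma abs_norm_sub_norm_latticePoint_le {k : ι → ℤ} {x : EuclideanSpace ℝ ι}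
    (hx : x ∈ unitCube k) : |‖x‖ - ‖latticePoint k‖| ≤ √(Fintype.card ι) :=
  (abs_norm_sub_norm_le _ _).trans (norm_sub_latticePoint_le hx)

variable {A B ρ : ℝ}

lemma iUnion_unitCube_subset_annulus (hρ : √(Fintype.card ι) ≤ ρ) :
    ⋃ k ∈ latticeShell (ι := ι) A B, unitCube k ⊆ annulus (A - ρ) (B + ρ) := by
  simp only [iUnion_subset_iff, mem_latticeShell]
  intro k hk x hx
  have := abs_le.1 ((abs_norm_sub_norm_latticePoint_le hx).trans hρ)
  exact ⟨by linarith [hk.1], by linarith [hk.2]⟩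

lemma annulus_subset_iUnion_unitCube (hρ : √(Fintype.card ι) ≤ ρ) :
    (annulus (A + ρ) (B - ρ) : Set (EuclideanSpace ℝ ι)) ⊆ ⋃ k ∈ latticeShell A B, unitCube k := by
  intro x hx
  have := abs_le.1 ((abs_norm_sub_norm_latticePoint_le (mem_unitCube_floor x)).trans hρ)
  refine mem_biUnion (mem_latticeShell.2 ⟨?_, ?_⟩) (mem_unitCube_floor x)
  · linarith [hx.1]
  · linarith [hx.2]

lemma integral_biUnion_unitCube (s : Finset (ι → ℤ)) {f : EuclideanSpace ℝ ι → ℝ}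
    (hf : IntegrableOn f (⋃ k ∈ s, unitCube k)) :
    ∫ x in ⋃ k ∈ s, unitCube k, f x = ∑ k ∈ s, ∫ x in unitCube k, f x :=
  integral_biUnion_finset s (fun k _ => measurableSet_unitCube k)
    (pairwise_disjoint_unitCube.set_pairwise _) fun _ hk => hf.mono_set (subset_biUnion_of_mem hk)

lemma inv_norm_latticePoint_pow_le (p : ℕ) (hρ : √(Fintype.card ι) ≤ ρ) (hA : ρ < A)
    {k : ι → ℤ} (hk : A ≤ ‖latticePoint k‖) {x : EuclideanSpace ℝ ι} (hx : x ∈ unitCube k) :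
    ‖latticePoint k‖⁻¹ ^ p ≤ ((A + ρ) / A) ^ p * ‖x‖⁻¹ ^ p := by
  have hρ₀ : 0 ≤ ρ := (sqrt_nonneg _).trans hρ
  have hdist := abs_le.1 ((abs_norm_sub_norm_latticePoint_le hx).trans hρ)
  have hx₀ : 0 < ‖x‖ := by linarith
  have h : ‖latticePoint k‖⁻¹ ≤ (A + ρ) / A * ‖x‖⁻¹ := calc
    ‖latticePoint k‖⁻¹ ≤ (‖x‖ * A / (A + ρ))⁻¹ := by
      refine inv_anti₀ (div_pos (mul_pos hx₀ (by linarith)) (by linarith)) ?_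
      rw [div_le_iff₀ (by linarith)]
      nlinarith
    _ = (A + ρ) / A * ‖x‖⁻¹ := by field_simp
  rw [← mul_pow]
  exact pow_le_pow_left₀ (by positivity) h p

lemma mul_inv_norm_pow_le_inv_norm_latticePoint_pow (p : ℕ) (hρ : √(Fintype.card ι) ≤ ρ)
    (hA : ρ < A) {k : ι → ℤ} (hk : A ≤ ‖latticePoint k‖) {x : EuclideanSpace ℝ ι}
    (hx : x ∈ unitCube k) :
    ((A - ρ) / A) ^ p * ‖x‖⁻¹ ^ p ≤ ‖latticePoint k‖⁻¹ ^ p := by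
  have hρ₀ : 0 ≤ ρ := (sqrt_nonneg _).trans hρ
  have hdist := abs_le.1 ((abs_norm_sub_norm_latticePoint_le hx).trans hρ)
  have hx₀ : 0 < ‖x‖ := by linarith
  have h : (A - ρ) / A * ‖x‖⁻¹ ≤ ‖latticePoint k‖⁻¹ := calc
    (A - ρ) / A * ‖x‖⁻¹ = (‖x‖ * A / (A - ρ))⁻¹ := by field_simp
    _ ≤ ‖latticePoint k‖⁻¹ := by
      refine inv_anti₀ (by linarith) ?_
      rw [le_div_iff₀ (by linarith)]
      nlinarith
  rw [← mul_pow]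
  exact pow_le_pow_left₀ (mul_nonneg (div_nonneg (by linarith) (by linarith)) (by positivity)) h p

lemma sum_latticeShell_le_integral (p : ℕ) (hρ : √(Fintype.card ι) ≤ ρ) (hA : ρ < A) :
    ∑ k ∈ latticeShell (ι := ι) A B, ‖latticePoint k‖⁻¹ ^ p ≤
      ((A + ρ) / A) ^ p * ∫ x : EuclideanSpace ℝ ι in annulus (A - ρ) (B + ρ), ‖x‖⁻¹ ^ p := by
  have hint : IntegrableOn (fun x : EuclideanSpace ℝ ι => ‖x‖⁻¹ ^ p) (annulus (A - ρ) (B + ρ)) :=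
    integrableOn_annulus_inv_norm_pow _ p (sub_pos.2 hA) _
  have hsub := iUnion_unitCube_subset_annulus (A := A) (B := B) hρ
  have hc : 0 ≤ ((A + ρ) / A) ^ p := by
    have := (sqrt_nonneg _).trans hρ
    exact pow_nonneg (div_nonneg (by linarith) (by linarith)) p
  calc ∑ k ∈ latticeShell (ι := ι) A B, ‖latticePoint k‖⁻¹ ^ p
      = ∑ k ∈ latticeShell (ι := ι) A B, ∫ _ in unitCube k, ‖latticePoint k‖⁻¹ ^ p := by
        simp only [setIntegral_unitCube_const]
    _ ≤ ∑ k ∈ latticeShell (ι := ι) A B, ∫ x in unitCube k, ((A + ρ) / A) ^ p * ‖x‖⁻¹ ^ p := by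
        refine Finset.sum_le_sum fun k hk => setIntegral_mono_on
          (integrableOn_unitCube_const k _)
          ((hint.mono_set ((subset_biUnion_of_mem hk).trans hsub)).const_mul _)
          (measurableSet_unitCube k) fun x hx => ?_
        exact inv_norm_latticePoint_pow_le p hρ hA (mem_latticeShell.1 hk).1 hx
    _ = ((A + ρ) / A) ^ p * ∫ x in ⋃ k ∈ latticeShell A B, unitCube k, ‖x‖⁻¹ ^ p := by
        rw [integral_biUnion_unitCube _ (hint.mono_set hsub), Finset.mul_sum]
        simp only [integral_const_mul]
    _ ≤ ((A + ρ) / A) ^ p * ∫ x : EuclideanSpace ℝ ι in annulus (A - ρ) (B + ρ), ‖x‖⁻¹ ^ p :=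
        mul_le_mul_of_nonneg_left (setIntegral_mono_set hint
          (ae_of_all _ fun _ => by positivity) hsub.eventuallyLE) hc

lemma integral_le_sum_latticeShell (p : ℕ) (hρ : √(Fintype.card ι) ≤ ρ) (hA : ρ < A) :
    ((A - ρ) / A) ^ p * ∫ x : EuclideanSpace ℝ ι in annulus (A + ρ) (B - ρ), ‖x‖⁻¹ ^ p ≤
      ∑ k ∈ latticeShell (ι := ι) A B, ‖latticePoint k‖⁻¹ ^ p := by
  have hint : IntegrableOn (fun x : EuclideanSpace ℝ ι => ‖x‖⁻¹ ^ p)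
      (⋃ k ∈ latticeShell A B, unitCube k) :=
    (integrableOn_annulus_inv_norm_pow _ p (sub_pos.2 hA) _).mono_set
      (iUnion_unitCube_subset_annulus hρ)
  have hc : 0 ≤ ((A - ρ) / A) ^ p := by
    have := (sqrt_nonneg _).trans hρ
    exact pow_nonneg (div_nonneg (by linarith) (by linarith)) p
  calc ((A - ρ) / A) ^ p * ∫ x : EuclideanSpace ℝ ι in annulus (A + ρ) (B - ρ), ‖x‖⁻¹ ^ p
      ≤ ((A - ρ) / A) ^ p * ∫ x in ⋃ k ∈ latticeShell A B, unitCube k, ‖x‖⁻¹ ^ p :=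
        mul_le_mul_of_nonneg_left (setIntegral_mono_set hint
          (ae_of_all _ fun _ => by positivity) (annulus_subset_iUnion_unitCube hρ).eventuallyLE) hc
    _ = ∑ k ∈ latticeShell (ι := ι) A B, ∫ x in unitCube k, ((A - ρ) / A) ^ p * ‖x‖⁻¹ ^ p := by
        rw [integral_biUnion_unitCube _ hint, Finset.mul_sum]
        simp only [integral_const_mul]
    _ ≤ ∑ k ∈ latticeShell (ι := ι) A B, ∫ _ in unitCube k, ‖latticePoint k‖⁻¹ ^ p := by
        refine Finset.sum_le_sum fun k hk => setIntegral_mono_on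
          ((hint.mono_set (subset_biUnion_of_mem hk)).const_mul _) (integrableOn_unitCube_const k _)
          (measurableSet_unitCube k) fun x hx => ?_
        exact mul_inv_norm_pow_le_inv_norm_latticePoint_pow p hρ hA (mem_latticeShell.1 hk).1 hx
    _ = ∑ k ∈ latticeShell (ι := ι) A B, ‖latticePoint k‖⁻¹ ^ p := by
        simp only [setIntegral_unitCube_const]

lemma sum_latticeShell_le_card_mul (p : ℕ) (hA : 0 < A) :
    ∑ k ∈ latticeShell (ι := ι) A B, ‖latticePoint k‖⁻¹ ^ p ≤
      (latticeShell (ι := ι) A B).card * A⁻¹ ^ p := by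
  rw [← nsmul_eq_mul]
  refine Finset.sum_le_card_nsmul _ _ _ fun k hk => ?_
  gcongr
  exact (mem_latticeShell.1 hk).1

end Lattice

lemma log_le_log_two_add {q : ℝ} (hq : 0 < q) : log q ≤ log 2 + (q / 2 - 1) := by
  have := log_le_sub_one_of_pos (half_pos hq)
  rw [log_div hq.ne' two_ne_zero] at this
  linarith

lemma log_two_sub_le_log {q : ℝ} (hq : 0 < q) : log 2 - (2 / q - 1) ≤ log q := by
  have := log_le_sub_one_of_pos (div_pos two_pos hq)
  rw [log_div two_ne_zero hq.ne'] at this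
  linarith

-- The constants `31` and `10` are crude: they come from expanding in `1 / x ≤ 1 / 4`.
lemma div_pow_three_mul_log_le_log_two_add {x : ℝ} (hx : 4 ≤ x) :
    ((x + 2) / x) ^ 3 * log ((2 * x + 2) / (x - 2)) ≤ log 2 + 31 / x := by
  have hx₀ : 0 < x := by linarith
  have hu : x⁻¹ ≤ 4⁻¹ := inv_anti₀ (by norm_num) hx
  have hu₀ : 0 < x⁻¹ := inv_pos.2 hx₀
  have hq : 0 < (2 * x + 2) / (x - 2) := div_pos (by linarith) (by linarith)
  have hlog₀ : 0 ≤ log ((2 * x + 2) / (x - 2)) :=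
    log_nonneg ((one_le_div (by linarith)).2 (by linarith))
  have hlog : log ((2 * x + 2) / (x - 2)) ≤ log 2 + 6 * x⁻¹ := by
    refine (log_le_log_two_add hq).trans (add_le_add_right ?_ _)
    have h₂ : 0 < (x - 2) * 2 := by linarith
    rw [div_div, div_sub_one h₂.ne', ← div_eq_mul_inv, div_le_div_iff₀ h₂ hx₀]
    nlinarith
  have hcube : ((x + 2) / x) ^ 3 ≤ 1 + 10 * x⁻¹ := by
    rw [show (x + 2) / x = 1 + 2 * x⁻¹ by field_simp]
    nlinarith [mul_le_mul_of_nonneg_left hu hu₀.le, mul_le_mul_of_nonneg_left hu (sq_nonneg x⁻¹)]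
  have hlog2 : log 2 ≤ 1 := by linarith [log_two_lt_d9]
  calc ((x + 2) / x) ^ 3 * log ((2 * x + 2) / (x - 2))
      ≤ (1 + 10 * x⁻¹) * (log 2 + 6 * x⁻¹) := by gcongr
    _ ≤ log 2 + 31 / x := by
        rw [div_eq_mul_inv]
        nlinarith [log_nonneg one_le_two]

lemma log_two_sub_le_div_pow_three_mul_log {x : ℝ} (hx : 4 ≤ x) :
    log 2 - 10 / x ≤ ((x - 2) / x) ^ 3 * log ((2 * x - 2) / (x + 2)) := by
  have hx₀ : 0 < x := by linarith
  have hu : x⁻¹ ≤ 4⁻¹ := inv_anti₀ (by norm_num) hx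
  have hu₀ : 0 < x⁻¹ := inv_pos.2 hx₀
  have hq : 0 < (2 * x - 2) / (x + 2) := div_pos (by linarith) (by linarith)
  have hlog₀ : 0 ≤ log ((2 * x - 2) / (x + 2)) :=
    log_nonneg ((one_le_div (by linarith)).2 (by linarith))
  have hlog_le : log ((2 * x - 2) / (x + 2)) ≤ 1 := by
    refine (log_le_sub_one_of_pos hq).trans ?_
    rw [div_sub_one (by positivity), div_le_one (by positivity)]
    linarith
  have hlog : log 2 - 4 * x⁻¹ ≤ log ((2 * x - 2) / (x + 2)) := by
    refine le_trans (sub_le_sub_left ?_ _) (log_two_sub_le_log hq)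
    rw [div_div_eq_mul_div, div_sub_one (by linarith), ← div_eq_mul_inv,
      div_le_div_iff₀ (by linarith) hx₀]
    nlinarith
  have hcube : 1 - 6 * x⁻¹ ≤ ((x - 2) / x) ^ 3 := by
    rw [show (x - 2) / x = 1 - 2 * x⁻¹ by field_simp]
    nlinarith [mul_nonneg (sq_nonneg x⁻¹) (by linarith : (0 : ℝ) ≤ 12 - 8 * x⁻¹)]
  calc log 2 - 10 / x
      ≤ (1 - 6 * x⁻¹) * log ((2 * x - 2) / (x + 2)) := by
        rw [div_eq_mul_inv]
        nlinarith
    _ ≤ ((x - 2) / x) ^ 3 * log ((2 * x - 2) / (x + 2)) :=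
        mul_le_mul_of_nonneg_right hcube hlog₀

local notation "ℝ³" => EuclideanSpace ℝ (Fin 3)

lemma setIntegral_annulus_inv_norm_cube {a b : ℝ} (ha : 0 < a) (hab : a ≤ b) :
    ∫ x : ℝ³ in annulus a b, ‖x‖⁻¹ ^ 3 = 4 * π * log (b / a) := by
  have := setIntegral_annulus_inv_norm_pow_finrank (volume : Measure ℝ³) ha hab
  rw [finrank_euclideanSpace_fin, measureReal_def, EuclideanSpace.volume_ball_fin_three,
    ENNReal.ofReal_one, one_pow, one_mul, ENNReal.toReal_ofReal (by positivity)] at this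
  rw [this]
  ring

lemma znorm3_eq_norm_latticePoint (k : Fin 3 → ℤ) : znorm3 k = ‖latticePoint k‖ := by
  simp [znorm3, EuclideanSpace.norm_eq, latticePoint]

lemma alphaSeq_eq_sum_latticeShell {n : ℕ} (hn : n ≠ 0) :
    alphaSeq n = ∑ k ∈ latticeShell (ι := Fin 3) n (2 * n), ‖latticePoint k‖⁻¹ ^ 3 := by
  have hmem (k : Fin 3 → ℤ) : (k ≠ 0 ∧ (n : ℝ) ≤ znorm3 k ∧ znorm3 k ≤ 2 * n) ↔
      k ∈ latticeShell (n : ℝ) (2 * n) := by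
    rw [mem_latticeShell, znorm3_eq_norm_latticePoint, and_iff_right_of_imp]
    · rfl
    rintro ⟨hk, -⟩ rfl
    have : (0 : ℝ) < n := by positivity
    have h0 : latticePoint (0 : Fin 3 → ℤ) = 0 := by ext; simp [latticePoint]
    rw [h0, norm_zero] at hk
    linarith
  rw [alphaSeq, tsum_eq_sum fun k hk => if_neg (mt (hmem k).1 hk)]
  refine Finset.sum_congr rfl fun k hk => ?_
  rw [if_pos ((hmem k).2 hk), znorm3_eq_norm_latticePoint, one_div, inv_pow]

lemma alphaSeq_nonneg {n : ℕ} (hn : n ≠ 0) : 0 ≤ alphaSeq n := by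
  rw [alphaSeq_eq_sum_latticeShell hn]
  positivity

lemma sqrt_card_fin_three_le_two : √(Fintype.card (Fin 3)) ≤ 2 := by
  rw [Fintype.card_fin, sqrt_le_left two_pos.le]
  norm_num

lemma alphaSeq_le_125 {n : ℕ} (hn : n ≠ 0) : alphaSeq n ≤ 125 := by
  have hn₀ : (0 : ℝ) < n := by positivity
  have hcard : ((latticeShell (ι := Fin 3) n (2 * n)).card : ℝ) ≤ (4 * n + 1) ^ 3 := by
    have := card_latticeShell_le (ι := Fin 3) (n : ℝ) (2 * n)
    rw [show ⌈(2 * n : ℝ)⌉ = ((2 * n : ℕ) : ℤ) by exact_mod_cast Int.ceil_natCast (2 * n),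
      show 2 * ((2 * n : ℕ) : ℤ) + 1 = ((4 * n + 1 : ℕ) : ℤ) by push_cast; ring,
      Int.toNat_natCast, Fintype.card_fin] at this
    exact_mod_cast this
  calc alphaSeq n ≤ (latticeShell (ι := Fin 3) n (2 * n)).card * (n : ℝ)⁻¹ ^ 3 := by
        rw [alphaSeq_eq_sum_latticeShell hn]
        exact sum_latticeShell_le_card_mul 3 hn₀
    _ ≤ ((4 * n + 1) / n) ^ 3 := by
        rw [div_pow, div_eq_mul_inv, inv_pow]
        gcongr
    _ ≤ 5 ^ 3 := by
        gcongr
        rw [div_le_iff₀ hn₀]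
        linarith [(Nat.one_le_cast (α := ℝ)).2 (Nat.one_le_iff_ne_zero.2 hn)]
    _ = 125 := by norm_num

lemma alphaSeq_le_four_pi_log_two_add {n : ℕ} (hn : 4 ≤ n) :
    alphaSeq n ≤ 4 * π * log 2 + 4 * π * 31 / n := by
  have hn' : (4 : ℝ) ≤ n := by exact_mod_cast hn
  calc alphaSeq n
      ≤ ((n + 2) / n) ^ 3 * ∫ x : ℝ³ in annulus (n - 2) (2 * n + 2), ‖x‖⁻¹ ^ 3 := by
        rw [alphaSeq_eq_sum_latticeShell (by omega)]
        exact sum_latticeShell_le_integral 3 sqrt_card_fin_three_le_two (by linarith)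
    _ = 4 * π * (((n + 2) / n) ^ 3 * log ((2 * n + 2) / (n - 2))) := by
        rw [setIntegral_annulus_inv_norm_cube (by linarith) (by linarith)]
        ring
    _ ≤ 4 * π * (log 2 + 31 / n) := by
        gcongr
        exact div_pow_three_mul_log_le_log_two_add hn'
    _ = 4 * π * log 2 + 4 * π * 31 / n := by ring

lemma four_pi_log_two_sub_le_alphaSeq {n : ℕ} (hn : 4 ≤ n) :
    4 * π * log 2 - 4 * π * 10 / n ≤ alphaSeq n := by
  have hn' : (4 : ℝ) ≤ n := by exact_mod_cast hn
  calc 4 * π * log 2 - 4 * π * 10 / n = 4 * π * (log 2 - 10 / n) := by ring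
    _ ≤ 4 * π * (((n - 2) / n) ^ 3 * log ((2 * n - 2) / (n + 2))) := by
        gcongr
        exact log_two_sub_le_div_pow_three_mul_log hn'
    _ = ((n - 2) / n) ^ 3 * ∫ x : ℝ³ in annulus (n + 2) (2 * n - 2), ‖x‖⁻¹ ^ 3 := by
        rw [setIntegral_annulus_inv_norm_cube (by linarith) (by linarith)]
        ring
    _ ≤ alphaSeq n := by
        rw [alphaSeq_eq_sum_latticeShell (by omega)]
        exact integral_le_sum_latticeShell 3 sqrt_card_fin_three_le_two (by linarith)

/-- There is a constant `C > 0` such that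
`|α_n − 4π log 2| ≤ C / n` for all `n ≥ 1`. -/
theorem alphaSeq_approx_four_pi_log_two :
    ∃ C : ℝ, 0 < C ∧ ∀ n : ℕ, 1 ≤ n →
      |alphaSeq n - 4 * Real.pi * Real.log 2| ≤ C / (n : ℝ) := by
  refine ⟨500, by norm_num, fun n hn => ?_⟩
  have hn₀ : (0 : ℝ) < n := by exact_mod_cast hn
  have hlog2 : log 2 < 1 := by linarith [log_two_lt_d9]
  rcases lt_or_ge n 4 with hsmall | hlarge
  · have hn3 : (n : ℝ) ≤ 3 := by exact_mod_cast Nat.le_of_lt_succ hsmall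
    calc |alphaSeq n - 4 * π * log 2| ≤ 125 :=
          abs_sub_le_of_nonneg_of_le (alphaSeq_nonneg (by omega)) (alphaSeq_le_125 (by omega))
            (by positivity) (by nlinarith [pi_le_four, log_nonneg one_le_two])
      _ ≤ 500 / n := by rw [le_div_iff₀ hn₀]; linarith
  · have hupper := alphaSeq_le_four_pi_log_two_add hlarge
    have hlower := four_pi_log_two_sub_le_alphaSeq hlarge
    have h31 : 4 * π * 31 / n ≤ 500 / n := by gcongr; linarith [pi_le_four]
    have h10 : 4 * π * 10 / n ≤ 500 / n := by gcongr; linarith [pi_le_four]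
    rw [abs_le]
    constructor <;> linarith
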